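/- Let T be a standard finite tree and let f be a strictly increasing, level preserving, and downwards closed partial function from T to T. Then f is injective if and only if for all a₀, a₁ in the domain of f, ht(a₀ ∧ a₁) = ht(f(a₀) ∧ f(a₁)). -/

import Mathlib

noncomputable section
open scoped Classical

namespace AKST

/-- The first uncountable ordinal. -/
def ω1 : Ordinal := (Cardinal.aleph 1).ord

/-- The second uncountable ordinal. -/
def ω2 : Ordinal := (Cardinal.aleph 2).ord

/-- The height of a countable ordinal `γ`: the unique `α` with `ω·α ≤ γ < ω·(α+1)`. -/
def ht (γ : Ordinal) : Ordinal := γ / Ordinal.omega0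

/-- A standard finite tree. -/
structure SFT where
  elems : Finset Ordinal
  lt : Ordinal → Ordinal → Prop
  zero_mem : 0 ∈ elems
  mem_ok : ∀ x ∈ elems, x = 0 ∨ (Ordinal.omega0 ≤ x ∧ x < ω1)
  lt_mem : ∀ {x y}, lt x y → x ∈ elems ∧ y ∈ elems
  lt_trans' : ∀ {x y z}, lt x y → lt y z → lt x z
  lt_irrefl' : ∀ x, ¬ lt x x
  pred_linear : ∀ {x y z}, lt y x → lt z x → lt y z ∨ y = z ∨ lt z y
  lt_ht : ∀ {x y}, lt x y → ht x < ht y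
  pred_level : ∀ x ∈ elems, ∀ α, (∃ z ∈ elems, ht z = α) → α < ht x →
    ∃ y ∈ elems, ht y = α ∧ lt y x

namespace SFT

/-- The non-strict tree order. -/
def le (T : SFT) (x y : Ordinal) : Prop := T.lt x y ∨ (x = y ∧ x ∈ T.elems)

/-- `ht[T]`: the set of nonzero heights of elements of `T`. -/
def heights (T : SFT) : Set Ordinal := {α | α ≠ 0 ∧ ∃ x ∈ T.elems, ht x = α}

/-- Level `α` of `T`. -/
def level (T : SFT) (α : Ordinal) : Set Ordinal := {x | x ∈ T.elems ∧ ht x = α}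

/-- `max(ht[T])`. -/
def maxHeight (T : SFT) : Ordinal := sSup T.heights

/-- The least element of `ht[T]` greater than `α`. -/
def minAbove (T : SFT) (α : Ordinal) : Ordinal := sInf {β | β ∈ T.heights ∧ α < β}

/-- The drop-down `x↾α`: the unique element of `T` of height `α` below `x`. -/
def drop (T : SFT) (α x : Ordinal) : Ordinal :=
  if h : ∃ y, y ∈ T.elems ∧ ht y = α ∧ T.lt y x then h.choose else 0

/-- `z` is the meet of `x` and `y` in `T`. -/
def isMeet (T : SFT) (x y z : Ordinal) : Prop :=
  T.le z x ∧ T.le z y ∧ ∀ w, T.le w x → T.le w y → T.le w z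

/-- The meet `x ∧_T y`. -/
def meet (T : SFT) (x y : Ordinal) : Ordinal :=
  if h : ∃ z, T.isMeet x y z then h.choose else 0

/-- `U` extends `T`. -/
def Ext (T U : SFT) : Prop :=
  (↑T.elems : Set Ordinal) ⊆ ↑U.elems ∧ ∀ {x y}, T.lt x y → U.lt x y

/-- `X` has unique drop-downs to `α` in `T`. -/
def UniqueDrops (T : SFT) (α : Ordinal) (X : Set Ordinal) : Prop :=
  ∀ x ∈ X, ∀ y ∈ X, T.drop α x = T.drop α y → x = y

/-- `U` is a simple extension of `T`. -/
def SimpleExt (U T : SFT) : Prop :=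
  Ext T U ∧
  (∀ x ∈ U.elems, x ∉ T.elems → ht x ∉ T.heights) ∧
  (∀ α, α ∈ U.heights → α ∉ T.heights → α < T.maxHeight →
     U.UniqueDrops α (T.level (T.minAbove α)))

/-- `x` and `y` are incomparable in `T`. -/
def Incomp (T : SFT) (x y : Ordinal) : Prop := x ≠ y ∧ ¬ T.lt x y ∧ ¬ T.lt y x

/-- `T` is normal: every element has successors at every higher occupied level. -/
def Normal (T : SFT) : Prop :=
  ∀ x ∈ T.elems, ∀ γ ∈ T.heights, ht x < γ → ∃ y ∈ T.elems, ht y = γ ∧ T.lt x y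

end SFT

/-! Partial functions on a tree, represented by their graphs. -/

def dom (f : Set (Ordinal × Ordinal)) : Set Ordinal := {x | ∃ y, (x, y) ∈ f}

def ran (f : Set (Ordinal × Ordinal)) : Set Ordinal := {y | ∃ x, (x, y) ∈ f}

/-- The graph is single-valued. -/
def FuncGraph (f : Set (Ordinal × Ordinal)) : Prop :=
  ∀ {x y y'}, (x, y) ∈ f → (x, y') ∈ f → y = y'

/-- The graph is injective. -/
def InjGraph (f : Set (Ordinal × Ordinal)) : Prop :=
  ∀ {x x' y}, (x, y) ∈ f → (x', y) ∈ f → x = x'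

/-- The graph is a partial function from `T` to `T`. -/
def Carr (T : SFT) (f : Set (Ordinal × Ordinal)) : Prop :=
  ∀ p ∈ f, p.1 ∈ T.elems ∧ p.2 ∈ T.elems

/-- Strictly increasing. -/
def StrictIncr (T : SFT) (f : Set (Ordinal × Ordinal)) : Prop :=
  ∀ {x y x' y'}, (x, y) ∈ f → (x', y') ∈ f → T.lt x x' → T.lt y y'

/-- Level preserving. -/
def LevelPres (f : Set (Ordinal × Ordinal)) : Prop :=
  ∀ p ∈ f, ht p.1 = ht p.2

/-- Downwards closed (the domain is closed under drop-downs). -/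
def DownClosedDom (T : SFT) (f : Set (Ordinal × Ordinal)) : Prop :=
  ∀ x y, (x, y) ∈ f → ∀ β ∈ T.heights, β < ht x →
    ∃ x' y', x' ∈ T.elems ∧ ht x' = β ∧ T.lt x' x ∧ (x', y') ∈ f

/-- No fixed points other than 0. -/
def NoFix (f : Set (Ordinal × Ordinal)) : Prop := ∀ x, (x, x) ∈ f → x = 0

/-- `f` is a standard function on `T`. -/
def IsStdFun (T : SFT) (f : Set (Ordinal × Ordinal)) : Prop :=
  Carr T f ∧ FuncGraph f ∧ InjGraph f ∧ StrictIncr T f ∧ LevelPres f ∧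
    DownClosedDom T f ∧ NoFix f

/-- `f^m(x) = y`, for `m ∈ {-1, 1}`. -/
def appPow (f : Set (Ordinal × Ordinal)) (m : ℤ) (x y : Ordinal) : Prop :=
  (m = 1 ∧ (x, y) ∈ f) ∨ (m = -1 ∧ (y, x) ∈ f)

/-- `X↾α` and `X` are `f`-consistent. -/
def Consistent (T : SFT) (f : Set (Ordinal × Ordinal)) (α : Ordinal) (X : Set Ordinal) : Prop :=
  ∀ x ∈ X, ∀ y ∈ X, ((T.drop α x, T.drop α y) ∈ f ↔ (x, y) ∈ f)

/-- The family `{F τ : τ ∈ A}` is separated on the tuple `a 0, ..., a (n-1)`. -/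
def SepOnTuple (F : Ordinal → Set (Ordinal × Ordinal)) (A : Finset Ordinal)
    (n : ℕ) (a : ℕ → Ordinal) : Prop :=
  ∀ i < n, ∀ j₀ < i, ∀ j₁ < i, ∀ m₀ m₁ : ℤ, ∀ τ₀ ∈ A, ∀ τ₁ ∈ A,
    (m₀ = 1 ∨ m₀ = -1) → (m₁ = 1 ∨ m₁ = -1) →
    appPow (F τ₀) m₀ (a i) (a j₀) → appPow (F τ₁) m₁ (a i) (a j₁) →
    j₀ = j₁ ∧ m₀ = m₁ ∧ τ₀ = τ₁

/-- The family is separated on the set `X`. -/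
def SepOnSet (F : Ordinal → Set (Ordinal × Ordinal)) (A : Finset Ordinal)
    (X : Set Ordinal) : Prop :=
  ∃ (n : ℕ) (a : ℕ → Ordinal), (∀ i < n, ∀ j < n, a i = a j → i = j) ∧
    X = a '' {i | i < n} ∧ SepOnTuple F A n a

/-- The family is `ρ`-separated on the tuple `a 0, ..., a (n-1)` (of elements of level `α`). -/
def RhoSepOnTuple (ρ : Ordinal → Ordinal → Ordinal) (F : Ordinal → Set (Ordinal × Ordinal))
    (A : Finset Ordinal) (α : Ordinal) (n : ℕ) (a : ℕ → Ordinal) : Prop :=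
  ∀ i < n, ∀ j₀ < i, ∀ j₁ < i, ∀ m₀ m₁ : ℤ, ∀ τ₀ ∈ A, ∀ τ₁ ∈ A,
    (m₀ = 1 ∨ m₀ = -1) → (m₁ = 1 ∨ m₁ = -1) →
    appPow (F τ₀) m₀ (a i) (a j₀) → appPow (F τ₁) m₁ (a i) (a j₁) →
    j₀ = j₁ ∧ ((m₀ = m₁ ∧ τ₀ = τ₁) ∨ α ≤ ρ τ₀ τ₁)

/-- The family is `ρ`-separated on the set `X ⊆ T_α`. -/
def RhoSepOnSet (ρ : Ordinal → Ordinal → Ordinal) (F : Ordinal → Set (Ordinal × Ordinal))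
    (A : Finset Ordinal) (α : Ordinal) (X : Set Ordinal) : Prop :=
  ∃ (n : ℕ) (a : ℕ → Ordinal), (∀ i < n, ∀ j < n, a i = a j → i = j) ∧
    X = a '' {i | i < n} ∧ RhoSepOnTuple ρ F A α n a

/-- There is a loop in `X` with respect to the family `{F τ : τ ∈ A}`. -/
def HasLoop (F : Ordinal → Set (Ordinal × Ordinal)) (A : Finset Ordinal)
    (X : Set Ordinal) : Prop :=
  ∃ p : ℕ, 4 ≤ p ∧ ∃ c : ℕ → Ordinal,
    (∀ i < p, c i ∈ X) ∧
    (∀ i < p - 1, ∀ j < p - 1, c i = c j → i = j) ∧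
    c 0 = c (p - 1) ∧
    (∀ i < p - 1, ∃ τ ∈ A, ∃ m : ℤ, (m = 1 ∨ m = -1) ∧ appPow (F τ) m (c i) (c (i + 1)))

/-- `p` is a member of `T ⊗ T`. -/
def InOtimes (T : SFT) (p : Ordinal × Ordinal) : Prop :=
  p.1 ∈ T.elems ∧ p.2 ∈ T.elems ∧ ht p.1 = ht p.2

/-- `f ⊆ T ⊗ T` is downwards closed as a subset of `T ⊗ T`. -/
def DCPairs (T : SFT) (f : Set (Ordinal × Ordinal)) : Prop :=
  ∀ p ∈ f, ∀ q, InOtimes T q → T.le q.1 p.1 → T.le q.2 p.2 → q ∈ f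

/-- The downward closure of `f` in `U`. -/
def dcl (U : SFT) (f : Set (Ordinal × Ordinal)) : Set (Ordinal × Ordinal) :=
  {p | InOtimes U p ∧ ∃ q ∈ f, U.le p.1 q.1 ∧ U.le p.2 q.2}

end AKST

open AKST AKST.SFT

/-! Since `f` is downwards closed, strictly increasing and level preserving, it commutes with
drop-downs: if `w ≤ a ∈ dom f` and `ht w ≠ 0`, then `w ∈ dom f` and `f w` is the element of
height `ht w` below `f a`. So a common lower bound of `a₀, a₁` is sent to a common lower bound of
`f a₀, f a₁` of the same height, whence `ht (a₀ ∧ a₁) ≤ ht (f a₀ ∧ f a₁)`. Every `v ≤ f aᵢ` is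
`f xᵢ` for some `xᵢ ≤ aᵢ`; when `f` is injective, `x₀ = x₁` is a common lower bound of `a₀, a₁`,
giving the reverse inequality.
Conversely, `f a₀ = f a₁` forces `ht (a₀ ∧ a₁) = ht a₀ = ht a₁`, so `a₀ = a₀ ∧ a₁ = a₁`. -/

namespace AKST

theorem ht_zero : ht 0 = 0 := Ordinal.zero_div _

namespace SFT

variable (T : SFT) {x y z : Ordinal}

theorem eq_zero_of_ht_eq_zero (hx : x ∈ T.elems) (h : ht x = 0) : x = 0 := by
  rcases T.mem_ok x hx with h0 | ⟨hω, _⟩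
  · exact h0
  · exact absurd h ((Ordinal.div_pos Ordinal.omega0_ne_zero).2 hω).ne'

variable {T}

theorem le_refl (hx : x ∈ T.elems) : T.le x x := Or.inr ⟨rfl, hx⟩

theorem mem_of_le_left (h : T.le x y) : x ∈ T.elems := by
  rcases h with h | ⟨_, h⟩
  · exact (T.lt_mem h).1
  · exact h

theorem ht_le_of_le (h : T.le x y) : ht x ≤ ht y := by
  rcases h with h | ⟨rfl, _⟩
  · exact (T.lt_ht h).le
  · exact le_rfl

theorem eq_of_le_of_ht_eq (h : T.le x y) (hht : ht x = ht y) : x = y := by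
  rcases h with h | ⟨he, _⟩
  · exact absurd hht (T.lt_ht h).ne
  · exact he

theorem zero_le (hx : x ∈ T.elems) : T.le 0 x := by
  by_cases h0 : x = 0
  · exact Or.inr ⟨h0.symm, T.zero_mem⟩
  have hpos : 0 < ht x := by
    rcases T.mem_ok x hx with h | ⟨hω, _⟩
    · exact absurd h h0
    · exact (Ordinal.div_pos Ordinal.omega0_ne_zero).2 hω
  obtain ⟨y, hy, hty, hyx⟩ := T.pred_level x hx 0 ⟨0, T.zero_mem, ht_zero⟩ hpos
  exact Or.inl (T.eq_zero_of_ht_eq_zero hy hty ▸ hyx)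

theorem le_total_of_le_of_le (hx : T.le x z) (hy : T.le y z) : T.le x y ∨ T.le y x := by
  rcases hx with hx | ⟨rfl, _⟩
  · rcases hy with hy | ⟨rfl, _⟩
    · rcases T.pred_linear hx hy with h | rfl | h
      · exact Or.inl (Or.inl h)
      · exact Or.inl (le_refl (T.lt_mem hx).1)
      · exact Or.inr (Or.inl h)
    · exact Or.inl (Or.inl hx)
  · exact Or.inr hy

theorem eq_of_le_of_le_of_ht_eq (hx : T.le x z) (hy : T.le y z) (hht : ht x = ht y) :
    x = y := by
  rcases le_total_of_le_of_le hx hy with h | h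
  · exact eq_of_le_of_ht_eq h hht
  · exact (eq_of_le_of_ht_eq h hht.symm).symm

theorem exists_isMeet (hx : x ∈ T.elems) (hy : y ∈ T.elems) : ∃ z, T.isMeet x y z := by
  set S := T.elems.filter (fun w => T.le w x ∧ T.le w y)
  have h0 : 0 ∈ S := Finset.mem_filter.2 ⟨T.zero_mem, zero_le hx, zero_le hy⟩
  obtain ⟨w, hwS, hwmax⟩ := S.exists_max_image ht ⟨0, h0⟩
  obtain ⟨hw, hwx, hwy⟩ := Finset.mem_filter.1 hwS
  refine ⟨w, hwx, hwy, fun v hvx hvy => ?_⟩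
  have hvS : v ∈ S := Finset.mem_filter.2 ⟨mem_of_le_left hvx, hvx, hvy⟩
  rcases le_total_of_le_of_le hvx hwx with h | h
  · exact h
  · rw [← eq_of_le_of_ht_eq h (_root_.le_antisymm (ht_le_of_le h) (hwmax v hvS))]
    exact le_refl hw

theorem isMeet_meet (hx : x ∈ T.elems) (hy : y ∈ T.elems) : T.isMeet x y (T.meet x y) := by
  have hex := exists_isMeet hx hy
  rw [SFT.meet, dif_pos hex]
  exact hex.choose_spec

theorem meet_self (hx : x ∈ T.elems) : T.meet x x = x :=
  eq_of_le_of_ht_eq (isMeet_meet hx hx).1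
    (_root_.le_antisymm (ht_le_of_le (isMeet_meet hx hx).1)
      (ht_le_of_le ((isMeet_meet hx hx).2.2 x (le_refl hx) (le_refl hx))))

theorem ht_le_ht_meet (hx : x ∈ T.elems) (hy : y ∈ T.elems) (hzx : T.le z x) (hzy : T.le z y) :
    ht z ≤ ht (T.meet x y) :=
  ht_le_of_le ((isMeet_meet hx hy).2.2 z hzx hzy)

end SFT

section PartialFunction

variable {T : SFT} {f : Set (Ordinal × Ordinal)} {a b a₀ b₀ a₁ b₁ β : Ordinal}

theorem exists_mem_le_le_of_ht_le (hcarr : Carr T f) (hmono : StrictIncr T f)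
    (hdc : DownClosedDom T f) (h : (a, b) ∈ f) (hβ : β ∈ T.heights) (hβa : β ≤ ht a) :
    ∃ x y, (x, y) ∈ f ∧ T.le x a ∧ T.le y b ∧ ht x = β := by
  rcases hβa.lt_or_eq with hlt | rfl
  · obtain ⟨x, y, -, hxβ, hxa, hxy⟩ := hdc a b h β hβ hlt
    exact ⟨x, y, hxy, Or.inl hxa, Or.inl (hmono hxy h hxa), hxβ⟩
  · exact ⟨a, b, h, SFT.le_refl (hcarr _ h).1, SFT.le_refl (hcarr _ h).2, rfl⟩

theorem ht_meet_le_ht_meet_image (hcarr : Carr T f) (hfun : FuncGraph f)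
    (hmono : StrictIncr T f) (hlev : LevelPres f) (hdc : DownClosedDom T f)
    (h₀ : (a₀, b₀) ∈ f) (h₁ : (a₁, b₁) ∈ f) :
    ht (T.meet a₀ a₁) ≤ ht (T.meet b₀ b₁) := by
  obtain ⟨hw₀, hw₁, -⟩ := SFT.isMeet_meet (hcarr _ h₀).1 (hcarr _ h₁).1
  set w := T.meet a₀ a₁
  rcases eq_or_ne (ht w) 0 with hw | hw
  · exact hw ▸ _root_.zero_le
  have hβ : ht w ∈ T.heights := ⟨hw, w, SFT.mem_of_le_left hw₀, rfl⟩
  obtain ⟨x₀, y₀, hf₀, hx₀, hy₀, hht₀⟩ :=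
    exists_mem_le_le_of_ht_le hcarr hmono hdc h₀ hβ (SFT.ht_le_of_le hw₀)
  obtain ⟨x₁, y₁, hf₁, hx₁, hy₁, hht₁⟩ :=
    exists_mem_le_le_of_ht_le hcarr hmono hdc h₁ hβ (SFT.ht_le_of_le hw₁)
  have hx : x₁ = x₀ := (SFT.eq_of_le_of_le_of_ht_eq hx₁ hw₁ hht₁).trans
    (SFT.eq_of_le_of_le_of_ht_eq hx₀ hw₀ hht₀).symm
  have hy : y₁ = y₀ := hfun (hx ▸ hf₁) hf₀
  calc ht w = ht y₀ := hht₀.symm.trans (hlev _ hf₀)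
    _ ≤ _ := SFT.ht_le_ht_meet (hcarr _ h₀).2 (hcarr _ h₁).2 hy₀ (hy ▸ hy₁)

theorem ht_meet_image_le_ht_meet (hcarr : Carr T f) (hinj : InjGraph f)
    (hmono : StrictIncr T f) (hlev : LevelPres f) (hdc : DownClosedDom T f)
    (h₀ : (a₀, b₀) ∈ f) (h₁ : (a₁, b₁) ∈ f) :
    ht (T.meet b₀ b₁) ≤ ht (T.meet a₀ a₁) := by
  obtain ⟨hv₀, hv₁, -⟩ := SFT.isMeet_meet (hcarr _ h₀).2 (hcarr _ h₁).2
  set v := T.meet b₀ b₁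
  rcases eq_or_ne (ht v) 0 with hv | hv
  · exact hv ▸ _root_.zero_le
  have hβ : ht v ∈ T.heights := ⟨hv, v, SFT.mem_of_le_left hv₀, rfl⟩
  obtain ⟨x₀, y₀, hf₀, hx₀, hy₀, hht₀⟩ := exists_mem_le_le_of_ht_le hcarr hmono hdc h₀ hβ
    ((SFT.ht_le_of_le hv₀).trans_eq (hlev _ h₀).symm)
  obtain ⟨x₁, y₁, hf₁, hx₁, hy₁, hht₁⟩ := exists_mem_le_le_of_ht_le hcarr hmono hdc h₁ hβ
    ((SFT.ht_le_of_le hv₁).trans_eq (hlev _ h₁).symm)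
  have hy : y₁ = y₀ :=
    (SFT.eq_of_le_of_le_of_ht_eq hy₁ hv₁ ((hlev _ hf₁).symm.trans hht₁)).trans
      (SFT.eq_of_le_of_le_of_ht_eq hy₀ hv₀ ((hlev _ hf₀).symm.trans hht₀)).symm
  have hx : x₁ = x₀ := hinj (hy ▸ hf₁) hf₀
  calc ht v = ht x₀ := hht₀.symm
    _ ≤ _ := SFT.ht_le_ht_meet (hcarr _ h₀).1 (hcarr _ h₁).1 hx₀ (hx ▸ hx₁)

end PartialFunction

end AKST

/-- A strictly increasing, level preserving, downwards closed partial function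
from `T` to `T` is injective iff `ht(a₀ ∧ a₁) = ht(f(a₀) ∧ f(a₁))` for all `a₀, a₁` in its
domain. -/
theorem stmt_7 (T : SFT) (f : Set (Ordinal × Ordinal))
    (hcarr : Carr T f) (hfun : FuncGraph f) (hmono : StrictIncr T f)
    (hlev : LevelPres f) (hdc : DownClosedDom T f) :
    InjGraph f ↔ ∀ a₀ b₀ a₁ b₁, (a₀, b₀) ∈ f → (a₁, b₁) ∈ f →
      ht (T.meet a₀ a₁) = ht (T.meet b₀ b₁) := by
  constructor
  · intro hinj a₀ b₀ a₁ b₁ h₀ h₁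
    exact le_antisymm (ht_meet_le_ht_meet_image hcarr hfun hmono hlev hdc h₀ h₁)
      (ht_meet_image_le_ht_meet hcarr hinj hmono hlev hdc h₀ h₁)
  · intro hmeet x x' y h h'
    obtain ⟨hx, hx', -⟩ := SFT.isMeet_meet (hcarr _ h).1 (hcarr _ h').1
    have hht : ht (T.meet x x') = ht y := by
      rw [hmeet x y x' y h h', SFT.meet_self (hcarr _ h).2]
    calc x = T.meet x x' := (SFT.eq_of_le_of_ht_eq hx (hht.trans (hlev _ h).symm)).symm
      _ = x' := SFT.eq_of_le_of_ht_eq hx' (hht.trans (hlev _ h').symm)
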